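/- Embedding of classical logic into BD via ∘: for every formula φ over {¬, ∧, ∨}, φ is classically valid if and only if φ∘ is BD-valid, where φ∘ is obtained from φ by replacing every occurrence of every propositional variable p with ∘p. -/
import Mathlib


inductive FV | T | B | N | F
deriving DecidableEq

open FV

def fneg : FV → FV
  | T => F | F => T | B => B | N => N

def fand : FV → FV → FV
  | T, x => x
  | x, T => x
  | F, _ => F
  | _, F => F
  | B, B => B
  | N, N => N
  | B, N => F
  | N, B => F

def forr : FV → FV → FV
  | F, x => x
  | x, F => x
  | T, _ => T
  | _, T => T
  | B, B => B
  | N, N => N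
  | B, N => T
  | N, B => T

def fcirc : FV → FV
  | T => T | F => T | B => F | N => F

def ftri : FV → FV
  | T => T | B => T | N => F | F => F

inductive Fm
  | var : ℕ → Fm
  | neg : Fm → Fm
  | conj : Fm → Fm → Fm
  | disj : Fm → Fm → Fm
  | circ : Fm → Fm
  | tri : Fm → Fm

def eval (v : ℕ → FV) : Fm → FV
  | .var p => v p
  | .neg φ => fneg (eval v φ)
  | .conj φ χ => fand (eval v φ) (eval v χ)
  | .disj φ χ => forr (eval v φ) (eval v χ)
  | .circ φ => fcirc (eval v φ)
  | .tri φ => ftri (eval v φ)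

/-- designated values -/
def desig (x : FV) : Prop := x = T ∨ x = B

/-- formulas over {¬,∧,∨} -/
def isBD : Fm → Prop
  | .var _ => True
  | .neg φ => isBD φ
  | .conj φ χ => isBD φ ∧ isBD χ
  | .disj φ χ => isBD φ ∧ isBD χ
  | .circ _ => False
  | .tri _ => False

/-- formulas over {¬,∧,∨,∘} -/
def isCircFm : Fm → Prop
  | .var _ => True
  | .neg φ => isCircFm φ
  | .conj φ χ => isCircFm φ ∧ isCircFm χ
  | .disj φ χ => isCircFm φ ∧ isCircFm χ
  | .circ φ => isCircFm φ
  | .tri _ => False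

/-- formulas over {¬,∧,∨,△} -/
def isTriFm : Fm → Prop
  | .var _ => True
  | .neg φ => isTriFm φ
  | .conj φ χ => isTriFm φ ∧ isTriFm χ
  | .disj φ χ => isTriFm φ ∧ isTriFm χ
  | .circ _ => False
  | .tri φ => isTriFm φ

/-- BD entailment between single formulas -/
def ent (φ χ : Fm) : Prop := ∀ v, desig (eval v φ) → desig (eval v χ)

/-- classical (two-valued) evaluation of {¬,∧,∨}-formulas -/
def evalC (b : ℕ → Bool) : Fm → Bool
  | .var p => b p
  | .neg φ => !(evalC b φ)
  | .conj φ χ => evalC b φ && evalC b χ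
  | .disj φ χ => evalC b φ || evalC b χ
  | .circ φ => evalC b φ
  | .tri φ => evalC b φ


/-- replace every variable p by ∘p -/
def subCirc : Fm → Fm
  | .var p => .circ (.var p)
  | .neg φ => .neg (subCirc φ)
  | .conj φ χ => .conj (subCirc φ) (subCirc χ)
  | .disj φ χ => .disj (subCirc φ) (subCirc χ)
  | .circ φ => .circ (subCirc φ)
  | .tri φ => .tri (subCirc φ)


def toFV (b : Bool) : FV := if b then T else F

lemma key (φ : Fm) (hφ : isBD φ) (v : ℕ → FV) :
    eval v (subCirc φ) = toFV (evalC (fun p => decide (v p = T ∨ v p = F)) φ) := by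
  induction φ with
  | var p =>
    simp only [subCirc, eval, evalC]
    cases v p <;> simp [fcirc, toFV]
  | neg φ ih =>
    simp only [subCirc, eval, evalC, ih hφ]
    cases evalC (fun p => decide (v p = T ∨ v p = F)) φ <;> simp [fneg, toFV]
  | conj φ χ ihφ ihχ =>
    simp only [subCirc, eval, evalC, ihφ hφ.1, ihχ hφ.2]
    cases evalC (fun p => decide (v p = T ∨ v p = F)) φ <;>
      cases evalC (fun p => decide (v p = T ∨ v p = F)) χ <;> simp [fand, toFV]
  | disj φ χ ihφ ihχ =>
    simp only [subCirc, eval, evalC, ihφ hφ.1, ihχ hφ.2]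
    cases evalC (fun p => decide (v p = T ∨ v p = F)) φ <;>
      cases evalC (fun p => decide (v p = T ∨ v p = F)) χ <;> simp [forr, toFV]
  | circ φ _ => exact absurd hφ id
  | tri φ _ => exact absurd hφ id

theorem cpl_to_bd_circ (φ : Fm) (hφ : isBD φ) :
    (∀ b : ℕ → Bool, evalC b φ = true) ↔
    (∀ v : ℕ → FV, desig (eval v (subCirc φ))) := by
  constructor
  · intro h v
    rw [key φ hφ v, h]
    exact Or.inl rfl
  · intro h b
    have hv := h (fun p => if b p then T else N)
    rw [key φ hφ] at hv
    have heq : (fun p => decide ((if b p then T else N) = T ∨ (if b p then T else N) = F)) = b := by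
      funext p; cases b p <;> simp
    rw [heq] at hv
    cases hb : evalC b φ
    · rw [hb] at hv; simp [toFV, desig] at hv
    · rfl
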